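/- arXiv:1301.4949 — 4 statements merged into one kernel-verified Lean document; each statement's English description precedes it below -/
import Mathlib

section
/- An A-invariant subspace W of V is nice if and only if for all weights α_i, α_j ∈ Δ(W) such that α_j − α_i ∈ Δ(𝔤), one has π(𝔤_γ)W_{α_i} ⊥ W, where γ = α_j − α_i. -/
/-!
The subspaces `𝔪` and `𝔤_γ` (`γ ∈ Δ(𝔤)`) together span the orthogonal complement of `𝔞`, so
`m(w) ∈ 𝔞` iff `⟪π(Y)w, w⟫ = 0` for all `Y` in them. For `Y ∈ 𝔪` this holds by skewness. For
`Y ∈ 𝔤_γ`, note that `π(Y)` shifts weights by `γ`, distinct weight spaces are orthogonal, and,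
`W` being `𝔞`-invariant, the weight components of any `w ∈ W` lie in `W` (apply the operators
`π(X) - ⟪δ, X⟫`). The form `w ↦ ⟪π(Y)w, w⟫` on `W` therefore vanishes iff, by polarization, its
cross terms `⟪π(Y)u, z⟫` with `u ∈ W_α`, `z ∈ W_{α+γ}` do.
-/

open scoped InnerProductSpace
open Finset
open scoped Classical

/-- The (restricted) moment map of a linear family of operators `π` on an inner
product space `V`: `momentMap π v` is the unique element of `E` with
`⟪momentMap π v, Y⟫ = ⟪π Y v, v⟫ / ‖v‖²` for all `Y`. -/
noncomputable def momentMap {E V : Type*} [NormedAddCommGroup E] [InnerProductSpace ℝ E]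
    [FiniteDimensional ℝ E] [NormedAddCommGroup V] [InnerProductSpace ℝ V]
    (π : E →ₗ[ℝ] V →L[ℝ] V) (v : V) : E :=
  (InnerProductSpace.toDual ℝ E).symm <| LinearMap.toContinuousLinearMap
    { toFun := fun X => ⟪(π X) v, v⟫_ℝ / ‖v‖ ^ 2
      map_add' := fun X Y => by
        simp [map_add, ContinuousLinearMap.add_apply, inner_add_left, add_div]
      map_smul' := fun c X => by
        simp [map_smul, ContinuousLinearMap.smul_apply, inner_smul_left, mul_div_assoc] }

/-- The weight space `V_α = {v : ∀ X ∈ 𝔞, π(X)v = ⟪α,X⟫v}`. -/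
def wtSpace {E V : Type*} [NormedAddCommGroup E] [InnerProductSpace ℝ E]
    [NormedAddCommGroup V] [InnerProductSpace ℝ V]
    (π : E →ₗ[ℝ] V →L[ℝ] V) (𝔞 : Submodule ℝ E) (α : E) : Submodule ℝ V where
  carrier := {v | ∀ X ∈ 𝔞, (π X) v = ⟪α, X⟫_ℝ • v}
  add_mem' := fun {a b} ha hb X hX => by rw [map_add, ha X hX, hb X hX, smul_add]
  zero_mem' := fun X hX => by simp
  smul_mem' := fun t a ha X hX => by rw [map_smul, ha X hX, smul_comm]

/-- The (restricted) root space `𝔤_γ = {Y : ∀ X ∈ 𝔞, [X,Y] = ⟪γ,X⟫Y}`. -/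
def rootSpace {E : Type*} [NormedAddCommGroup E] [InnerProductSpace ℝ E]
    (bk : E →ₗ[ℝ] E →ₗ[ℝ] E) (𝔞 : Submodule ℝ E) (γ : E) : Submodule ℝ E where
  carrier := {Y | ∀ X ∈ 𝔞, bk X Y = ⟪γ, X⟫_ℝ • Y}
  add_mem' := fun {a b} ha hb X hX => by rw [map_add, ha X hX, hb X hX, smul_add]
  zero_mem' := fun X hX => by simp
  smul_mem' := fun t a ha X hX => by rw [map_smul, ha X hX, smul_comm]

/-- A subspace `W ⊆ V` is `A`-invariant if `π(X)W ⊆ W` for all `X ∈ 𝔞`. -/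
def AInvariant {E V : Type*} [NormedAddCommGroup E] [InnerProductSpace ℝ E]
    [NormedAddCommGroup V] [InnerProductSpace ℝ V]
    (π : E →ₗ[ℝ] V →L[ℝ] V) (𝔞 : Submodule ℝ E) (W : Submodule ℝ V) : Prop :=
  ∀ X ∈ 𝔞, ∀ w ∈ W, (π X) w ∈ W

/-- An `A`-invariant subspace `W ⊆ V` is a nice space if `momentMap π w ∈ 𝔞` for
every nonzero `w ∈ W`. -/
def IsNiceSpace {E V : Type*} [NormedAddCommGroup E] [InnerProductSpace ℝ E]
    [FiniteDimensional ℝ E] [NormedAddCommGroup V] [InnerProductSpace ℝ V]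
    (π : E →ₗ[ℝ] V →L[ℝ] V) (𝔞 : Submodule ℝ E) (W : Submodule ℝ V) : Prop :=
  AInvariant π 𝔞 W ∧ ∀ w ∈ W, w ≠ 0 → momentMap π w ∈ 𝔞

theorem inner_momentMap_eq_zero_iff {E V : Type*} [NormedAddCommGroup E] [InnerProductSpace ℝ E]
    [FiniteDimensional ℝ E] [NormedAddCommGroup V] [InnerProductSpace ℝ V]
    (π : E →ₗ[ℝ] V →L[ℝ] V) (v : V) (Y : E) :
    ⟪momentMap π v, Y⟫_ℝ = 0 ↔ ⟪π Y v, v⟫_ℝ = 0 := by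
  obtain rfl | hv := eq_or_ne v 0
  · simp [momentMap] -- `momentMap π 0 = 0` through division by `‖0‖ ^ 2 = 0`
  · simp [momentMap, InnerProductSpace.toDual_symm_apply, hv]

theorem Submodule.mem_of_mem_orthogonal_of_sup_eq_top {E : Type*} [NormedAddCommGroup E]
    [InnerProductSpace ℝ E] {U N : Submodule ℝ E} (hUN : U ≤ Nᗮ) (hsup : U ⊔ N = ⊤) {x : E}
    (hx : x ∈ Nᗮ) : x ∈ U := by
  obtain ⟨a, ha, n, hn, rfl⟩ := Submodule.mem_sup.1 (hsup ▸ Submodule.mem_top : x ∈ U ⊔ N)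
  have hn' : n ∈ Nᗮ := by simpa using Nᗮ.sub_mem hx (hUN ha)
  have hn0 : n = 0 := by
    simpa [N.inf_orthogonal_eq_bot] using Submodule.mem_inf.2 ⟨hn, hn'⟩
  simpa [hn0] using ha

theorem Submodule.mem_orthogonal_sup_biSup {E ι : Type*} [NormedAddCommGroup E]
    [InnerProductSpace ℝ E] {U : Submodule ℝ E} {s : Finset ι} {K : ι → Submodule ℝ E} {x : E}
    (hU : ∀ u ∈ U, ⟪u, x⟫_ℝ = 0) (hK : ∀ i ∈ s, ∀ y ∈ K i, ⟪y, x⟫_ℝ = 0) :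
    x ∈ (U ⊔ ⨆ i ∈ s, K i)ᗮ := by
  have hle : U ⊔ (⨆ i ∈ s, K i) ≤ (ℝ ∙ x)ᗮ := sup_le
    (fun u hu => Submodule.mem_orthogonal_singleton_iff_inner_left.2 (hU u hu))
    (iSup₂_le fun i hi y hy => Submodule.mem_orthogonal_singleton_iff_inner_left.2 (hK i hi y hy))
  exact (Submodule.mem_orthogonal _ _).2 fun y hy =>
    Submodule.mem_orthogonal_singleton_iff_inner_left.1 (hle hy)

section WeightSpaces

variable {𝔤 V : Type*} [NormedAddCommGroup 𝔤] [InnerProductSpace ℝ 𝔤]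
  [NormedAddCommGroup V] [InnerProductSpace ℝ V] {π : 𝔤 →ₗ[ℝ] V →L[ℝ] V} {𝔞 : Submodule ℝ 𝔤}

theorem apply_sub_smul_of_mem_wtSpace {α : 𝔤} {v : V} (hv : v ∈ wtSpace π 𝔞 α) (μ : 𝔤)
    {X : 𝔤} (hX : X ∈ 𝔞) : π X v - ⟪μ, X⟫_ℝ • v = ⟪α - μ, X⟫_ℝ • v := by
  rw [hv X hX, inner_sub_left, sub_smul]

/-- Test `π(α - β)`, self-adjoint since `α - β ∈ 𝔞`, against the pair `u, v`. -/
theorem inner_eq_zero_of_mem_wtSpace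
    (hsa : ∀ X ∈ 𝔞, ∀ v w : V, ⟪(π X) v, w⟫_ℝ = ⟪v, (π X) w⟫_ℝ)
    {α β : 𝔤} (hα : α ∈ 𝔞) (hβ : β ∈ 𝔞) (hne : α ≠ β)
    {u v : V} (hu : u ∈ wtSpace π 𝔞 α) (hv : v ∈ wtSpace π 𝔞 β) : ⟪u, v⟫_ℝ = 0 := by
  have hX : α - β ∈ 𝔞 := sub_mem hα hβ
  have h := hsa _ hX u v
  rw [hu _ hX, hv _ hX, real_inner_smul_left, real_inner_smul_right, ← sub_eq_zero, ← sub_mul,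
    ← inner_sub_left, real_inner_self_eq_norm_sq] at h
  exact (mul_eq_zero.1 h).resolve_left (pow_ne_zero _ (norm_ne_zero_iff.2 (sub_ne_zero.2 hne)))

theorem apply_mem_wtSpace_add {bk : 𝔤 →ₗ[ℝ] 𝔤 →ₗ[ℝ] 𝔤}
    (hrep : ∀ X Y : 𝔤, π (bk X Y) = π X * π Y - π Y * π X)
    {α γ Y : 𝔤} {v : V} (hY : Y ∈ rootSpace bk 𝔞 γ) (hv : v ∈ wtSpace π 𝔞 α) :
    π Y v ∈ wtSpace π 𝔞 (α + γ) := by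
  intro X hX
  have hcomm : π X (π Y v) = π (bk X Y) v + π Y (π X v) := by
    rw [hrep]; simp
  rw [hcomm, hY X hX, hv X hX, map_smul, map_smul, inner_add_left, add_smul,
    smul_apply, add_comm]

variable {W : Submodule ℝ V}

/-- The operator `π(β - δ) - ⟪δ, β - δ⟫` preserves `W`, kills the `δ`-component and rescales the
others, the `β`-component by `‖β - δ‖² ≠ 0`. -/
theorem AInvariant.mem_of_add_sum_mem (hW : AInvariant π 𝔞 W) {β : 𝔤} (hβ : β ∈ 𝔞)
    (t : Finset 𝔤) (ht : ∀ δ ∈ t, δ ∈ 𝔞) (hβt : β ∉ t) (f : 𝔤 → V)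
    (hf : ∀ δ ∈ insert β t, f δ ∈ wtSpace π 𝔞 δ) (hsum : f β + ∑ δ ∈ t, f δ ∈ W) : f β ∈ W := by
  induction t using Finset.induction_on generalizing f with
  | empty => simpa using hsum
  | insert δ t hδt ih =>
    have hδ : δ ∈ 𝔞 := ht δ (mem_insert_self δ t)
    have hX : β - δ ∈ 𝔞 := sub_mem hβ hδ
    have hβδ : β ≠ δ := fun h => hβt (h ▸ mem_insert_self δ t)
    set c : 𝔤 → ℝ := fun ε => ⟪ε - δ, β - δ⟫_ℝ
    have hcf : ∀ ε ∈ insert β (insert δ t), π (β - δ) (f ε) - ⟪δ, β - δ⟫_ℝ • f ε = c ε • f ε :=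
      fun ε hε => apply_sub_smul_of_mem_wtSpace (hf ε hε) δ hX
    have hcδ : c δ = 0 := by simp [c]
    have hmem : c β • f β + ∑ ε ∈ t, c ε • f ε ∈ W := by
      have h := sub_mem (hW _ hX _ hsum) (W.smul_mem ⟪δ, β - δ⟫_ℝ hsum)
      rwa [sum_insert hδt, map_add, map_add, map_sum, smul_add, smul_add, smul_sum,
        add_sub_add_comm, add_sub_add_comm, ← sum_sub_distrib,
        hcf β (mem_insert_self _ _), hcf δ (by simp), hcδ, zero_smul, zero_add,
        sum_congr rfl fun ε hε => hcf ε (by simp [hε])] at h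
    have hcβ : c β ≠ 0 := by
      simp only [c, real_inner_self_eq_norm_sq]
      exact pow_ne_zero _ (norm_ne_zero_iff.2 (sub_ne_zero.2 hβδ))
    have hcβf := ih (fun ε hε => ht ε (mem_insert_of_mem hε)) (fun h => hβt (mem_insert_of_mem h))
      (fun ε => c ε • f ε) (fun ε hε => (wtSpace π 𝔞 ε).smul_mem _
        (hf ε (insert_subset_insert β (subset_insert δ t) hε))) hmem
    simpa [hcβ] using W.smul_mem (c β)⁻¹ hcβf

theorem AInvariant.exists_sum_eq (hW : AInvariant π 𝔞 W) {ΔV : Finset 𝔤} (hΔV : ∀ α ∈ ΔV, α ∈ 𝔞)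
    (hVdec : (⨆ α ∈ ΔV, wtSpace π 𝔞 α) = ⊤) {w : V} (hw : w ∈ W) :
    ∃ f : 𝔤 → V, (∀ δ ∈ ΔV, f δ ∈ W ⊓ wtSpace π 𝔞 δ) ∧ ∑ δ ∈ ΔV, f δ = w := by
  obtain ⟨f, rfl⟩ := (Submodule.mem_iSup_finset_iff_exists_sum _ w).1 (hVdec ▸ Submodule.mem_top)
  refine ⟨fun δ => f δ, fun δ hδ => ⟨?_, (f δ).2⟩, rfl⟩
  rw [← add_sum_erase _ _ hδ] at hw
  exact hW.mem_of_add_sum_mem (hΔV δ hδ) _ (fun ε hε => hΔV ε (mem_of_mem_erase hε))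
    (notMem_erase δ ΔV) (fun ε => f ε) (fun ε _ => (f ε).2) hw

/-- Against a weight vector of weight `α`, only the `α`-component of `z` counts. -/
theorem AInvariant.inner_eq_zero_of_forall_mem_inf_wtSpace (hW : AInvariant π 𝔞 W)
    (hsa : ∀ X ∈ 𝔞, ∀ v w : V, ⟪(π X) v, w⟫_ℝ = ⟪v, (π X) w⟫_ℝ)
    {ΔV : Finset 𝔤} (hΔV : ∀ α ∈ ΔV, α ∈ 𝔞) (hVdec : (⨆ α ∈ ΔV, wtSpace π 𝔞 α) = ⊤)
    {α : 𝔤} (hα : α ∈ 𝔞) {x : V} (hx : x ∈ wtSpace π 𝔞 α)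
    (h : α ∈ ΔV → ∀ z ∈ W ⊓ wtSpace π 𝔞 α, ⟪x, z⟫_ℝ = 0) {z : V} (hz : z ∈ W) :
    ⟪x, z⟫_ℝ = 0 := by
  obtain ⟨f, hf, rfl⟩ := hW.exists_sum_eq hΔV hVdec hz
  rw [inner_sum]
  refine sum_eq_zero fun δ hδ => ?_
  obtain rfl | hne := eq_or_ne α δ
  · exact h hδ _ (hf α hδ)
  · exact inner_eq_zero_of_mem_wtSpace hsa hα (hΔV δ hδ) hne hx (hf δ hδ).2

variable {bk : 𝔤 →ₗ[ℝ] 𝔤 →ₗ[ℝ] 𝔤} {ΔV : Finset 𝔤}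

/-- Polarization of the vanishing form `w ↦ ⟪π(Y)w, w⟫` at `u + z`; of the two cross terms, the one
pairing weights `α + 2γ` and `α` vanishes since `γ ≠ 0`. -/
theorem AInvariant.inner_apply_eq_zero_of_forall_inner_apply_self (hW : AInvariant π 𝔞 W)
    (hsa : ∀ X ∈ 𝔞, ∀ v w : V, ⟪(π X) v, w⟫_ℝ = ⟪v, (π X) w⟫_ℝ)
    (hΔV : ∀ α ∈ ΔV, α ∈ 𝔞) (hVdec : (⨆ α ∈ ΔV, wtSpace π 𝔞 α) = ⊤)
    (hrep : ∀ X Y : 𝔤, π (bk X Y) = π X * π Y - π Y * π X)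
    {γ Y : 𝔤} (hγ : γ ∈ 𝔞) (hγ0 : γ ≠ 0) (hY : Y ∈ rootSpace bk 𝔞 γ)
    (hself : ∀ w ∈ W, ⟪π Y w, w⟫_ℝ = 0) {α : 𝔤} (hα : α ∈ 𝔞) {u : V}
    (hu : u ∈ W ⊓ wtSpace π 𝔞 α) {z : V} (hz : z ∈ W) : ⟪π Y u, z⟫_ℝ = 0 := by
  have hαγ : α + γ ∈ 𝔞 := add_mem hα hγ
  refine hW.inner_eq_zero_of_forall_mem_inf_wtSpace hsa hΔV hVdec hαγ
    (apply_mem_wtSpace_add hrep hY hu.2) (fun _ z hz => ?_) hz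
  have hne : α + γ + γ ≠ α := by
    rw [add_assoc, ne_eq, add_eq_left, ← two_smul ℝ, smul_eq_zero]
    simpa using hγ0
  have hzu : ⟪π Y z, u⟫_ℝ = 0 := inner_eq_zero_of_mem_wtSpace hsa (add_mem hαγ hγ) hα hne
    (apply_mem_wtSpace_add hrep hY hz.2) hu.2
  have h := hself _ (add_mem hu.1 hz.1)
  rw [map_add, inner_add_left, inner_add_right, inner_add_right] at h
  linarith [hself u hu.1, hself z hz.1]

theorem AInvariant.inner_apply_self_eq_zero_of_orthogonality (hW : AInvariant π 𝔞 W)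
    (hsa : ∀ X ∈ 𝔞, ∀ v w : V, ⟪(π X) v, w⟫_ℝ = ⟪v, (π X) w⟫_ℝ)
    (hΔV : ∀ α ∈ ΔV, α ∈ 𝔞) (hVdec : (⨆ α ∈ ΔV, wtSpace π 𝔞 α) = ⊤)
    (hrep : ∀ X Y : 𝔤, π (bk X Y) = π X * π Y - π Y * π X)
    {γ Y : 𝔤} (hγ : γ ∈ 𝔞) (hY : Y ∈ rootSpace bk 𝔞 γ)
    (horth : ∀ αi ∈ ΔV, ∀ αj ∈ ΔV, W ⊓ wtSpace π 𝔞 αi ≠ ⊥ → W ⊓ wtSpace π 𝔞 αj ≠ ⊥ →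
      αj - αi = γ → ∀ u ∈ W ⊓ wtSpace π 𝔞 αi, ∀ z ∈ W, ⟪(π Y) u, z⟫_ℝ = 0)
    {w : V} (hw : w ∈ W) : ⟪π Y w, w⟫_ℝ = 0 := by
  obtain ⟨f, hf, hsum⟩ := hW.exists_sum_eq hΔV hVdec hw
  calc ⟪π Y w, w⟫_ℝ = ∑ δ ∈ ΔV, ⟪π Y (f δ), w⟫_ℝ := by rw [← sum_inner, ← map_sum, hsum]
    _ = 0 := sum_eq_zero fun δ hδ => by
      refine hW.inner_eq_zero_of_forall_mem_inf_wtSpace hsa hΔV hVdec (add_mem (hΔV δ hδ) hγ)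
        (apply_mem_wtSpace_add hrep hY (hf δ hδ).2) (fun hδγ z hz => ?_) hw
      obtain h0 | h0 := eq_or_ne (f δ) 0
      · simp [h0]
      obtain hz0 | hz0 := eq_or_ne z 0
      · simp [hz0]
      exact horth δ hδ _ hδγ ((Submodule.ne_bot_iff _).2 ⟨_, hf δ hδ, h0⟩)
        ((Submodule.ne_bot_iff _).2 ⟨z, hz, hz0⟩) (add_sub_cancel_left δ γ) _ (hf δ hδ) z hz.1

end WeightSpaces

theorem isNice_iff_orthogonality_general
    {𝔤 V : Type*} [NormedAddCommGroup 𝔤] [InnerProductSpace ℝ 𝔤] [FiniteDimensional ℝ 𝔤]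
    [NormedAddCommGroup V] [InnerProductSpace ℝ V]
    -- the Lie bracket of `𝔤` and the representation `π : 𝔤 → 𝔤𝔩(V)`:
    (bk : 𝔤 →ₗ[ℝ] 𝔤 →ₗ[ℝ] 𝔤)
    (π : 𝔤 →ₗ[ℝ] V →L[ℝ] V)
    (hrep : ∀ X Y : 𝔤, π (bk X Y) = π X * π Y - π Y * π X)
    -- `𝔞` is an abelian subalgebra acting by self-adjoint operators:
    (𝔞 : Submodule ℝ 𝔤)
    (hsa : ∀ X ∈ 𝔞, ∀ v w : V, ⟪(π X) v, w⟫_ℝ = ⟪v, (π X) w⟫_ℝ)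
    -- roots and weights:
    (Δ𝔤 : Finset 𝔤) (hΔ𝔤 : ∀ γ ∈ Δ𝔤, γ ∈ 𝔞 ∧ γ ≠ 0)
    (ΔV : Finset 𝔤) (hΔV : ∀ α ∈ ΔV, α ∈ 𝔞)
    -- `𝔤₀ = 𝔞 ⊕ 𝔪` is the centralizer of `𝔞`, `π` is skew-adjoint on `𝔪`:
    (𝔪 : Submodule ℝ 𝔤)
    (hskew : ∀ Y ∈ 𝔪, ∀ v w : V, ⟪(π Y) v, w⟫_ℝ = -⟪v, (π Y) w⟫_ℝ)
    (h𝔞𝔪 : ∀ X ∈ 𝔞, ∀ Y ∈ 𝔪, ⟪X, Y⟫_ℝ = 0)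
    -- the orthogonal restricted-root space decomposition of `𝔤`:
    (h𝔤dec : (𝔞 ⊔ 𝔪) ⊔ (⨆ γ ∈ Δ𝔤, rootSpace bk 𝔞 γ) = ⊤)
    (h𝔤orth : ∀ γ ∈ Δ𝔤, ∀ Y ∈ rootSpace bk 𝔞 γ, ∀ Z : 𝔤,
      (Z ∈ 𝔞 ⊔ 𝔪 ∨ ∃ γ' ∈ Δ𝔤, γ' ≠ γ ∧ Z ∈ rootSpace bk 𝔞 γ') → ⟪Y, Z⟫_ℝ = 0)
    -- the weight space decomposition of `V`:
    (hVdec : (⨆ α ∈ ΔV, wtSpace π 𝔞 α) = ⊤)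
    (W : Submodule ℝ V) (hWinv : AInvariant π 𝔞 W)
    :
    (∀ w ∈ W, w ≠ 0 → momentMap π w ∈ 𝔞) ↔
      (∀ αi ∈ ΔV, ∀ αj ∈ ΔV, W ⊓ wtSpace π 𝔞 αi ≠ ⊥ → W ⊓ wtSpace π 𝔞 αj ≠ ⊥ →
        αj - αi ∈ Δ𝔤 →
        ∀ Y ∈ rootSpace bk 𝔞 (αj - αi), ∀ u ∈ W ⊓ wtSpace π 𝔞 αi, ∀ z ∈ W,
          ⟪(π Y) u, z⟫_ℝ = 0) := by
  constructor
  · intro hnice αi hαi _ _ _ _ hγ Y hY u hu z hz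
    obtain ⟨hγ𝔞, hγ0⟩ := hΔ𝔤 _ hγ
    refine hWinv.inner_apply_eq_zero_of_forall_inner_apply_self hsa hΔV hVdec hrep hγ𝔞 hγ0 hY
      (fun w hw => ?_) (hΔV αi hαi) hu hz
    obtain rfl | hw0 := eq_or_ne w 0
    · simp
    rw [← inner_momentMap_eq_zero_iff, real_inner_comm]
    exact h𝔤orth _ hγ Y hY _ (Or.inl (Submodule.mem_sup_left (hnice w hw hw0)))
  · intro horth w hw _
    have h𝔞perp : 𝔞 ≤ (𝔪 ⊔ ⨆ γ ∈ Δ𝔤, rootSpace bk 𝔞 γ)ᗮ := fun a ha =>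
      Submodule.mem_orthogonal_sup_biSup (fun Y hY => real_inner_comm a Y ▸ h𝔞𝔪 a ha Y hY)
        fun γ hγ Y hY => h𝔤orth γ hγ Y hY a (Or.inl (Submodule.mem_sup_left ha))
    refine Submodule.mem_of_mem_orthogonal_of_sup_eq_top h𝔞perp (by rwa [← sup_assoc])
      (Submodule.mem_orthogonal_sup_biSup (fun Y hY => ?_) fun γ hγ Y hY => ?_)
    · rw [real_inner_comm, inner_momentMap_eq_zero_iff]
      linarith [hskew Y hY w w, real_inner_comm w (π Y w)]
    · rw [real_inner_comm, inner_momentMap_eq_zero_iff]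
      exact hWinv.inner_apply_self_eq_zero_of_orthogonality hsa hΔV hVdec hrep (hΔ𝔤 γ hγ).1 hY
        (fun αi hαi αj hαj hi hj hγ' => horth αi hαi αj hαj hi hj (hγ' ▸ hγ) Y (hγ' ▸ hY)) hw

/-- an `A`-invariant subspace `W` is nice iff for all weights
`α_i, α_j ∈ Δ(W)` with `γ = α_j − α_i ∈ Δ(𝔤)` one has `π(𝔤_γ)W_{α_i} ⊥ W`. -/
theorem isNice_iff_orthogonality
    {𝔤 V : Type*} [NormedAddCommGroup 𝔤] [InnerProductSpace ℝ 𝔤] [FiniteDimensional ℝ 𝔤]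
    [NormedAddCommGroup V] [InnerProductSpace ℝ V] [FiniteDimensional ℝ V]
    -- the Lie bracket of `𝔤` and the representation `π : 𝔤 → 𝔤𝔩(V)`:
    (bk : 𝔤 →ₗ[ℝ] 𝔤 →ₗ[ℝ] 𝔤)
    (hbk_alt : ∀ X : 𝔤, bk X X = 0)
    (hbk_jac : ∀ X Y Z : 𝔤, bk X (bk Y Z) + bk Y (bk Z X) + bk Z (bk X Y) = 0)
    (π : 𝔤 →ₗ[ℝ] V →L[ℝ] V)
    (hrep : ∀ X Y : 𝔤, π (bk X Y) = π X * π Y - π Y * π X)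
    -- `𝔞` is an abelian subalgebra acting by self-adjoint operators:
    (𝔞 : Submodule ℝ 𝔤)
    (hab : ∀ X ∈ 𝔞, ∀ Y ∈ 𝔞, bk X Y = 0)
    (hsa : ∀ X ∈ 𝔞, ∀ v w : V, ⟪(π X) v, w⟫_ℝ = ⟪v, (π X) w⟫_ℝ)
    -- roots and weights:
    (Δ𝔤 : Finset 𝔤) (hΔ𝔤 : ∀ γ ∈ Δ𝔤, γ ∈ 𝔞 ∧ γ ≠ 0)
    (ΔV : Finset 𝔤) (hΔV : ∀ α ∈ ΔV, α ∈ 𝔞)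
    -- `𝔤₀ = 𝔞 ⊕ 𝔪` is the centralizer of `𝔞`, `π` is skew-adjoint on `𝔪`:
    (𝔪 : Submodule ℝ 𝔤)
    (hskew : ∀ Y ∈ 𝔪, ∀ v w : V, ⟪(π Y) v, w⟫_ℝ = -⟪v, (π Y) w⟫_ℝ)
    (h𝔞𝔪 : ∀ X ∈ 𝔞, ∀ Y ∈ 𝔪, ⟪X, Y⟫_ℝ = 0)
    (h𝔤₀ : ∀ Z : 𝔤, (∀ X ∈ 𝔞, bk X Z = 0) ↔ Z ∈ 𝔞 ⊔ 𝔪)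
    -- the orthogonal restricted-root space decomposition of `𝔤`:
    (h𝔤dec : (𝔞 ⊔ 𝔪) ⊔ (⨆ γ ∈ Δ𝔤, rootSpace bk 𝔞 γ) = ⊤)
    (h𝔤orth : ∀ γ ∈ Δ𝔤, ∀ Y ∈ rootSpace bk 𝔞 γ, ∀ Z : 𝔤,
      (Z ∈ 𝔞 ⊔ 𝔪 ∨ ∃ γ' ∈ Δ𝔤, γ' ≠ γ ∧ Z ∈ rootSpace bk 𝔞 γ') → ⟪Y, Z⟫_ℝ = 0)
    -- the weight space decomposition of `V`:
    (hVdec : (⨆ α ∈ ΔV, wtSpace π 𝔞 α) = ⊤)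
    (W : Submodule ℝ V) (hWinv : AInvariant π 𝔞 W)
    :
    (∀ w ∈ W, w ≠ 0 → momentMap π w ∈ 𝔞) ↔
      (∀ αi ∈ ΔV, ∀ αj ∈ ΔV, W ⊓ wtSpace π 𝔞 αi ≠ ⊥ → W ⊓ wtSpace π 𝔞 αj ≠ ⊥ →
        αj - αi ∈ Δ𝔤 →
        ∀ Y ∈ rootSpace bk 𝔞 (αj - αi), ∀ u ∈ W ⊓ wtSpace π 𝔞 αi, ∀ z ∈ W,
          ⟪(π Y) u, z⟫_ℝ = 0) :=
  isNice_iff_orthogonality_general bk π hrep 𝔞 hsa Δ𝔤 hΔ𝔤 ΔV hΔV 𝔪 hskew h𝔞𝔪 h𝔤dec h𝔤orth hVdec W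
    hWinv
end

section
/- Let W ⊆ V be an A-invariant subspace. If for all weights α_i, α_j ∈ Δ(W) one has α_i − α_j ∉ Δ(𝔤), then W is a nice space. -/
open scoped InnerProductSpace
open Finset
open scoped Classical

section Aux

variable {E V : Type*} [NormedAddCommGroup E] [InnerProductSpace ℝ E]
  [NormedAddCommGroup V] [InnerProductSpace ℝ V]

lemma inner_momentMap [FiniteDimensional ℝ E]
    (π : E →ₗ[ℝ] V →L[ℝ] V) (v : V) (Y : E) :
    ⟪momentMap π v, Y⟫_ℝ = ⟪(π Y) v, v⟫_ℝ / ‖v‖ ^ 2 := by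
  simp [momentMap, InnerProductSpace.toDual_symm_apply]

lemma mem_wtSpace {π : E →ₗ[ℝ] V →L[ℝ] V} {𝔞 : Submodule ℝ E} {α : E} {v : V} :
    v ∈ wtSpace π 𝔞 α ↔ ∀ X ∈ 𝔞, (π X) v = ⟪α, X⟫_ℝ • v := Iff.rfl

lemma mem_rootSpace {bk : E →ₗ[ℝ] E →ₗ[ℝ] E} {𝔞 : Submodule ℝ E} {γ Y : E} :
    Y ∈ rootSpace bk 𝔞 γ ↔ ∀ X ∈ 𝔞, bk X Y = ⟪γ, X⟫_ℝ • Y := Iff.rfl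

/-- Weight vectors for distinct weights (in `𝔞`) are orthogonal. -/
lemma wtSpace_orth (π : E →ₗ[ℝ] V →L[ℝ] V) (𝔞 : Submodule ℝ E)
    (hsa : ∀ X ∈ 𝔞, ∀ v w : V, ⟪(π X) v, w⟫_ℝ = ⟪v, (π X) w⟫_ℝ)
    {μ ν : E} (hμ : μ ∈ 𝔞) (hν : ν ∈ 𝔞) (hne : μ ≠ ν)
    {u v : V} (hu : u ∈ wtSpace π 𝔞 μ) (hv : v ∈ wtSpace π 𝔞 ν) : ⟪u, v⟫_ℝ = 0 := by
  have hX : μ - ν ∈ 𝔞 := sub_mem hμ hν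
  have h := hsa _ hX u v
  rw [mem_wtSpace.mp hu _ hX, mem_wtSpace.mp hv _ hX, real_inner_smul_left,
    real_inner_smul_right] at h
  have h3 : ⟪μ - ν, μ - ν⟫_ℝ * ⟪u, v⟫_ℝ = 0 := by
    rw [inner_sub_left, sub_mul]; linarith
  rcases mul_eq_zero.mp h3 with hc | hc
  · exact absurd (inner_self_eq_zero.mp hc) (sub_ne_zero.mpr hne)
  · exact hc

/-- A root vector maps the `α`-weight space into the `α + γ`-weight space. -/
lemma rootSpace_apply_wtSpace {bk : E →ₗ[ℝ] E →ₗ[ℝ] E} {π : E →ₗ[ℝ] V →L[ℝ] V}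
    (hrep : ∀ X Y : E, π (bk X Y) = π X * π Y - π Y * π X)
    {𝔞 : Submodule ℝ E} {γ α Y : E} (hY : Y ∈ rootSpace bk 𝔞 γ)
    {v : V} (hv : v ∈ wtSpace π 𝔞 α) : (π Y) v ∈ wtSpace π 𝔞 (α + γ) := by
  intro X hX
  have h1 : (π (bk X Y)) v = (π X) ((π Y) v) - (π Y) ((π X) v) := by
    rw [hrep X Y]; rfl
  have h2 : (π (bk X Y)) v = ⟪γ, X⟫_ℝ • (π Y) v := by
    rw [mem_rootSpace.mp hY X hX, map_smul]; rfl
  have h3 : (π Y) ((π X) v) = ⟪α, X⟫_ℝ • (π Y) v := by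
    rw [mem_wtSpace.mp hv X hX, map_smul]
  have : (π X) ((π Y) v) = ⟪γ, X⟫_ℝ • (π Y) v + ⟪α, X⟫_ℝ • (π Y) v := by
    rw [← h2, ← h3] at *; rw [h1] at h2 ⊢; linear_combination (norm := module) h2
  rw [this, inner_add_left, add_smul]; module

/-- The weight components of an element of an `A`-invariant subspace `W`
belong to `W`. -/
lemma components_mem (π : E →ₗ[ℝ] V →L[ℝ] V) (𝔞 : Submodule ℝ E) (W : Submodule ℝ V)
    (hWinv : AInvariant π 𝔞 W) :
    ∀ s : Finset E, (∀ α ∈ s, α ∈ 𝔞) → ∀ f : E → V, (∀ α ∈ s, f α ∈ wtSpace π 𝔞 α) →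
      (∑ α ∈ s, f α) ∈ W → ∀ α₀ ∈ s, f α₀ ∈ W := by
  intro s
  induction s using Finset.strongInduction with
  | _ s ih =>
    intro h𝔞 f hf hsum α₀ hα₀
    by_cases hsingle : ∀ β ∈ s, β = α₀
    · have hs : s = {α₀} := Finset.eq_singleton_iff_unique_mem.mpr ⟨hα₀, hsingle⟩
      rw [hs, Finset.sum_singleton] at hsum; exact hsum
    · push_neg at hsingle
      obtain ⟨β, hβ, hβne⟩ := hsingle
      have hX : α₀ - β ∈ 𝔞 := sub_mem (h𝔞 α₀ hα₀) (h𝔞 β hβ)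
      have hsum2 : (∑ α ∈ s.erase β, (fun α => ⟪α - β, α₀ - β⟫_ℝ • f α) α) ∈ W := by
        have h1 : (π (α₀ - β)) (∑ α ∈ s, f α) - ⟪β, α₀ - β⟫_ℝ • (∑ α ∈ s, f α) ∈ W :=
          W.sub_mem (hWinv _ hX _ hsum) (W.smul_mem _ hsum)
        have h2 : (π (α₀ - β)) (∑ α ∈ s, f α) - ⟪β, α₀ - β⟫_ℝ • (∑ α ∈ s, f α)
            = ∑ α ∈ s, ⟪α - β, α₀ - β⟫_ℝ • f α := by
          rw [map_sum, Finset.smul_sum, ← Finset.sum_sub_distrib]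
          refine Finset.sum_congr rfl fun α hα => ?_
          rw [mem_wtSpace.mp (hf α hα) _ hX, inner_sub_left, sub_smul]
        have h3 : ∑ α ∈ s.erase β, ⟪α - β, α₀ - β⟫_ℝ • f α
            = ∑ α ∈ s, ⟪α - β, α₀ - β⟫_ℝ • f α :=
          Finset.sum_erase _ (by simp)
        simpa only [h3, ← h2] using h1
      have hmem : ⟪α₀ - β, α₀ - β⟫_ℝ • f α₀ ∈ W := by
        refine ih (s.erase β) (Finset.erase_ssubset hβ)
          (fun α hα => h𝔞 α (Finset.mem_of_mem_erase hα)) _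
          (fun α hα => Submodule.smul_mem _ _ (hf α (Finset.mem_of_mem_erase hα)))
          hsum2 α₀ (Finset.mem_erase.mpr ⟨Ne.symm hβne, hα₀⟩)
      have hc : ⟪α₀ - β, α₀ - β⟫_ℝ ≠ 0 :=
        fun hc => (sub_ne_zero.mpr (Ne.symm hβne)) (inner_self_eq_zero.mp hc)
      have := W.smul_mem (⟪α₀ - β, α₀ - β⟫_ℝ)⁻¹ hmem
      rwa [smul_smul, inv_mul_cancel₀ hc, one_smul] at this

/-- If `⟪m, ·⟫` vanishes on each `p i`, it vanishes on their supremum. -/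
lemma inner_eq_zero_of_mem_iSup {m : E} {ι : Type*} {t : Finset ι} {p : ι → Submodule ℝ E}
    (h : ∀ i ∈ t, ∀ Z ∈ p i, ⟪m, Z⟫_ℝ = 0) {q : E} (hq : q ∈ ⨆ i ∈ t, p i) :
    ⟪m, q⟫_ℝ = 0 := by
  obtain ⟨μ, hμ⟩ := (Submodule.mem_iSup_finset_iff_exists_sum _ _).mp hq
  rw [← hμ, inner_sum]
  exact Finset.sum_eq_zero fun i hi => h i hi _ (μ i).2

end Aux

/-- if no difference of two weights of `W` is a root, then the
`A`-invariant subspace `W` is a nice space. -/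
theorem isNice_of_no_root_differences
    {𝔤 V : Type*} [NormedAddCommGroup 𝔤] [InnerProductSpace ℝ 𝔤] [FiniteDimensional ℝ 𝔤]
    [NormedAddCommGroup V] [InnerProductSpace ℝ V] [FiniteDimensional ℝ V]
    -- the Lie bracket of `𝔤` and the representation `π : 𝔤 → 𝔤𝔩(V)`:
    (bk : 𝔤 →ₗ[ℝ] 𝔤 →ₗ[ℝ] 𝔤)
    (hbk_alt : ∀ X : 𝔤, bk X X = 0)
    (hbk_jac : ∀ X Y Z : 𝔤, bk X (bk Y Z) + bk Y (bk Z X) + bk Z (bk X Y) = 0)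
    (π : 𝔤 →ₗ[ℝ] V →L[ℝ] V)
    (hrep : ∀ X Y : 𝔤, π (bk X Y) = π X * π Y - π Y * π X)
    -- `𝔞` is an abelian subalgebra acting by self-adjoint operators:
    (𝔞 : Submodule ℝ 𝔤)
    (hab : ∀ X ∈ 𝔞, ∀ Y ∈ 𝔞, bk X Y = 0)
    (hsa : ∀ X ∈ 𝔞, ∀ v w : V, ⟪(π X) v, w⟫_ℝ = ⟪v, (π X) w⟫_ℝ)
    -- roots and weights:
    (Δ𝔤 : Finset 𝔤) (hΔ𝔤 : ∀ γ ∈ Δ𝔤, γ ∈ 𝔞 ∧ γ ≠ 0)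
    (ΔV : Finset 𝔤) (hΔV : ∀ α ∈ ΔV, α ∈ 𝔞)
    -- `𝔤₀ = 𝔞 ⊕ 𝔪` is the centralizer of `𝔞`, `π` is skew-adjoint on `𝔪`:
    (𝔪 : Submodule ℝ 𝔤)
    (hskew : ∀ Y ∈ 𝔪, ∀ v w : V, ⟪(π Y) v, w⟫_ℝ = -⟪v, (π Y) w⟫_ℝ)
    (h𝔞𝔪 : ∀ X ∈ 𝔞, ∀ Y ∈ 𝔪, ⟪X, Y⟫_ℝ = 0)
    (h𝔤₀ : ∀ Z : 𝔤, (∀ X ∈ 𝔞, bk X Z = 0) ↔ Z ∈ 𝔞 ⊔ 𝔪)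
    -- the orthogonal restricted-root space decomposition of `𝔤`:
    (h𝔤dec : (𝔞 ⊔ 𝔪) ⊔ (⨆ γ ∈ Δ𝔤, rootSpace bk 𝔞 γ) = ⊤)
    (h𝔤orth : ∀ γ ∈ Δ𝔤, ∀ Y ∈ rootSpace bk 𝔞 γ, ∀ Z : 𝔤,
      (Z ∈ 𝔞 ⊔ 𝔪 ∨ ∃ γ' ∈ Δ𝔤, γ' ≠ γ ∧ Z ∈ rootSpace bk 𝔞 γ') → ⟪Y, Z⟫_ℝ = 0)
    -- the weight space decomposition of `V`:
    (hVdec : (⨆ α ∈ ΔV, wtSpace π 𝔞 α) = ⊤)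
    (W : Submodule ℝ V) (hWinv : AInvariant π 𝔞 W)
    (hhyp : ∀ αi ∈ ΔV, ∀ αj ∈ ΔV, W ⊓ wtSpace π 𝔞 αi ≠ ⊥ → W ⊓ wtSpace π 𝔞 αj ≠ ⊥ →
      αi - αj ∉ Δ𝔤)
    :
    IsNiceSpace π 𝔞 W  := by
  refine ⟨hWinv, fun w hw hw0 => ?_⟩
  have hwtop : w ∈ ⨆ α ∈ ΔV, wtSpace π 𝔞 α := hVdec ▸ Submodule.mem_top
  obtain ⟨μ, hμ⟩ := (Submodule.mem_iSup_finset_iff_exists_sum _ _).mp hwtop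
  have hfwt : ∀ α ∈ ΔV, (μ α : V) ∈ wtSpace π 𝔞 α := fun α _ => (μ α).2
  have hfW : ∀ α ∈ ΔV, (μ α : V) ∈ W :=
    components_mem π 𝔞 W hWinv ΔV hΔV _ hfwt (hμ ▸ hw)
  have key : ∀ γ ∈ Δ𝔤, ∀ Y ∈ rootSpace bk 𝔞 γ, ⟪(π Y) w, w⟫_ℝ = 0 := by
    intro γ hγ Y hY
    rw [← hμ, map_sum, sum_inner]
    refine Finset.sum_eq_zero fun α hα => ?_
    rw [inner_sum]
    refine Finset.sum_eq_zero fun β hβ => ?_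
    by_cases hfα : (μ α : V) = 0
    · simp [hfα]
    by_cases hfβ : (μ β : V) = 0
    · simp [hfβ]
    have hne : α + γ ≠ β := by
      intro he
      have h1 : W ⊓ wtSpace π 𝔞 α ≠ ⊥ :=
        Submodule.ne_bot_iff _ |>.mpr ⟨(μ α : V), ⟨hfW α hα, hfwt α hα⟩, hfα⟩
      have h2 : W ⊓ wtSpace π 𝔞 β ≠ ⊥ :=
        Submodule.ne_bot_iff _ |>.mpr ⟨(μ β : V), ⟨hfW β hβ, hfwt β hβ⟩, hfβ⟩
      exact hhyp β hβ α hα h2 h1 (by rw [← he, add_sub_cancel_left]; exact hγ)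
    exact wtSpace_orth π 𝔞 hsa (add_mem (hΔV α hα) (hΔ𝔤 γ hγ).1) (hΔV β hβ) hne
      (rootSpace_apply_wtSpace hrep hY (hfwt α hα)) (hfwt β hβ)
  set m := momentMap π w with hm
  have hminner : ∀ Z : 𝔤, (Z ∈ 𝔪 ∨ ∃ γ ∈ Δ𝔤, Z ∈ rootSpace bk 𝔞 γ) → ⟪m, Z⟫_ℝ = 0 := by
    intro Z hZ
    rw [hm, inner_momentMap]
    rcases hZ with hZ | ⟨γ, hγ, hZ⟩
    · have h1 := hskew Z hZ w w
      have hc := real_inner_comm w ((π Z) w)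
      have h2 : ⟪(π Z) w, w⟫_ℝ = 0 := by linarith
      rw [h2, zero_div]
    · rw [key γ hγ Z hZ, zero_div]
  have hmtop : m ∈ (𝔞 ⊔ 𝔪) ⊔ (⨆ γ ∈ Δ𝔤, rootSpace bk 𝔞 γ) := h𝔤dec ▸ Submodule.mem_top
  obtain ⟨p, hp, q, hq, hpq⟩ := Submodule.mem_sup.mp hmtop
  obtain ⟨a, ha, n, hn, hpan⟩ := Submodule.mem_sup.mp hp
  have hk : m = a + (n + q) := by rw [← hpq, ← hpan, add_assoc]
  have hmq : ⟪m, q⟫_ℝ = 0 :=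
    inner_eq_zero_of_mem_iSup (fun γ hγ Z hZ => hminner Z (Or.inr ⟨γ, hγ, hZ⟩)) hq
  have hmk : ⟪m, n + q⟫_ℝ = 0 := by
    rw [inner_add_right, hminner n (Or.inl hn), hmq, add_zero]
  have haq : ⟪a, q⟫_ℝ = 0 := by
    refine inner_eq_zero_of_mem_iSup (fun γ hγ Z hZ => ?_) hq
    rw [real_inner_comm]
    exact h𝔤orth γ hγ Z hZ a (Or.inl (Submodule.mem_sup_left ha))
  have hak : ⟪a, n + q⟫_ℝ = 0 := by
    rw [inner_add_right, h𝔞𝔪 a ha n hn, haq, add_zero]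
  have hkk : ⟪n + q, n + q⟫_ℝ = 0 := by
    have h5 : ⟪m - a, n + q⟫_ℝ = 0 := by rw [inner_sub_left, hmk, hak, sub_zero]
    rwa [hk, add_sub_cancel_left] at h5
  have hk0 : n + q = 0 := inner_self_eq_zero.mp hkk
  rw [hk, hk0, add_zero]
  exact ha
end

section
/- Let a = (a₁,a₂,a₃) and b = (b₁,b₂,b₃) be distinct multi-indices with a₁+a₂+a₃ = b₁+b₂+b₃ = d, let x^a and x^b denote the corresponding monomials in ℝ[x₁,x₂,x₃]_d, and let W = span_ℝ{x^a, x^b}. Then ⟨π(E_{ij})p, q⟩ = 0 for all 1 ≤ i ≠ j ≤ 3 and all p, q ∈ W (i.e., W is a nice space for the GL₃(ℝ)-action) if and only if a − b ∉ {e_i − e_j : 1 ≤ i ≠ j ≤ 3}, where e₁, e₂, e₃ are the standard basis vectors of ℤ³. -/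
open Finset MvPolynomial
open scoped Classical

/-- The inner product on polynomials for which distinct monomials are orthogonal and
`‖x₁^{d₁}x₂^{d₂}x₃^{d₃}‖² = d₁!·d₂!·d₃!`. -/
noncomputable def polyInner (p q : MvPolynomial (Fin 3) ℝ) : ℝ :=
  ∑ m ∈ p.support ∪ q.support,
    p.coeff m * q.coeff m * ∏ i : Fin 3, ((m i).factorial : ℝ)

/-- The representation of `𝔤𝔩₃(ℝ)` on polynomials determined by the matrix units:
`π(E_{ij})p = −x_j ∂p/∂x_i`. -/
noncomputable def piE (i j : Fin 3) (p : MvPolynomial (Fin 3) ℝ) :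
    MvPolynomial (Fin 3) ℝ :=
  -(MvPolynomial.X j * MvPolynomial.pderiv i p)

lemma polyInner_eq_sum {p q : MvPolynomial (Fin 3) ℝ} {s : Finset (Fin 3 →₀ ℕ)}
    (h : p.support ∪ q.support ⊆ s) :
    polyInner p q = ∑ m ∈ s, p.coeff m * q.coeff m * ∏ i : Fin 3, ((m i).factorial : ℝ) := by
  refine Finset.sum_subset h fun m _ hm => ?_
  have : p.coeff m = 0 := by
    by_contra h'
    exact hm (Finset.mem_union_left _ (MvPolynomial.mem_support_iff.2 h'))
  simp [this]

lemma polyInner_monomial (m m' : Fin 3 →₀ ℕ) (c c' : ℝ) :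
    polyInner (monomial m c) (monomial m' c') =
      if m = m' then c * c' * ∏ i : Fin 3, ((m i).factorial : ℝ) else 0 := by
  by_cases h : m = m'
  · subst h
    rw [polyInner_eq_sum (s := {m}) (by
      refine Finset.union_subset ?_ ?_ <;> exact MvPolynomial.support_monomial_subset)]
    simp [MvPolynomial.coeff_monomial]
  · rw [polyInner_eq_sum (s := {m, m'}) (by
      refine Finset.union_subset ?_ ?_
      · exact MvPolynomial.support_monomial_subset.trans (by simp)
      · exact MvPolynomial.support_monomial_subset.trans (by simp))]
    rw [Finset.sum_pair h]
    simp [MvPolynomial.coeff_monomial, h, Ne.symm h]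

lemma polyInner_add_left (p p' q : MvPolynomial (Fin 3) ℝ) :
    polyInner (p + p') q = polyInner p q + polyInner p' q := by
  rw [polyInner_eq_sum (s := p.support ∪ p'.support ∪ q.support)
      (Finset.union_subset ((MvPolynomial.support_add).trans (by intro x hx; simp at hx ⊢; tauto))
        (by intro x hx; simp [hx])),
    polyInner_eq_sum (s := p.support ∪ p'.support ∪ q.support)
      (by intro x hx; simp at hx ⊢; tauto),
    polyInner_eq_sum (s := p.support ∪ p'.support ∪ q.support)
      (by intro x hx; simp at hx ⊢; tauto),
    ← Finset.sum_add_distrib]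
  refine Finset.sum_congr rfl fun m _ => ?_
  simp [MvPolynomial.coeff_add]; ring

lemma polyInner_smul_left (c : ℝ) (p q : MvPolynomial (Fin 3) ℝ) :
    polyInner (c • p) q = c * polyInner p q := by
  rw [polyInner_eq_sum (s := p.support ∪ q.support)
      (Finset.union_subset ((MvPolynomial.support_smul).trans (by simp)) (by simp)),
    polyInner_eq_sum (s := p.support ∪ q.support) (by simp), Finset.mul_sum]
  refine Finset.sum_congr rfl fun m _ => ?_
  simp [MvPolynomial.coeff_smul]; ring

lemma polyInner_add_right (p q q' : MvPolynomial (Fin 3) ℝ) :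
    polyInner p (q + q') = polyInner p q + polyInner p q' := by
  rw [polyInner_eq_sum (s := p.support ∪ (q.support ∪ q'.support))
      (Finset.union_subset (by simp)
        (Finset.Subset.trans (MvPolynomial.support_add) (by intro x hx; simp at hx ⊢; tauto))),
    polyInner_eq_sum (s := p.support ∪ (q.support ∪ q'.support))
      (by intro x hx; simp at hx ⊢; tauto),
    polyInner_eq_sum (s := p.support ∪ (q.support ∪ q'.support))
      (by intro x hx; simp at hx ⊢; tauto),
    ← Finset.sum_add_distrib]
  refine Finset.sum_congr rfl fun m _ => ?_
  simp [MvPolynomial.coeff_add]; ring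

lemma polyInner_smul_right (c : ℝ) (p q : MvPolynomial (Fin 3) ℝ) :
    polyInner p (c • q) = c * polyInner p q := by
  rw [polyInner_eq_sum (s := p.support ∪ q.support)
      (Finset.union_subset (by simp) ((MvPolynomial.support_smul).trans (by simp))),
    polyInner_eq_sum (s := p.support ∪ q.support) (by simp), Finset.mul_sum]
  refine Finset.sum_congr rfl fun m _ => ?_
  simp [MvPolynomial.coeff_smul]; ring

lemma piE_add (i j : Fin 3) (p q : MvPolynomial (Fin 3) ℝ) :
    piE i j (p + q) = piE i j p + piE i j q := by
  unfold piE
  rw [map_add, mul_add, neg_add]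

lemma piE_smul (i j : Fin 3) (c : ℝ) (p : MvPolynomial (Fin 3) ℝ) :
    piE i j (c • p) = c • piE i j p := by
  simp [piE, Algebra.mul_smul_comm]

lemma piE_monomial (i j : Fin 3) (u : Fin 3 →₀ ℕ) :
    piE i j (monomial u (1 : ℝ)) =
      monomial (Finsupp.single j 1 + (u - Finsupp.single i 1)) (-(u i : ℝ)) := by
  rw [piE, MvPolynomial.pderiv_monomial, map_neg, neg_inj, one_mul,
    MvPolynomial.monomial_single_add (e := 1), pow_one]

lemma exp_eq_iff {i j : Fin 3} (hij : i ≠ j) {u v : Fin 3 →₀ ℕ} (hu : u i ≠ 0) :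
    Finsupp.single j 1 + (u - Finsupp.single i 1) = v ↔
      ∀ k, (u k : ℤ) - (v k : ℤ) =
        (if k = i then 1 else 0) - (if k = j then 1 else 0) := by
  have hu' : 1 ≤ u i := Nat.one_le_iff_ne_zero.mpr hu
  rw [Finsupp.ext_iff]
  constructor <;> intro h k <;> have H := h k <;>
    simp only [Finsupp.add_apply, Finsupp.tsub_apply, Finsupp.single_apply] at H ⊢ <;>
    split_ifs at H ⊢ <;> subst_vars <;>
    first
      | omega
      | simp_all
      | (exfalso; omega)

lemma inner_zero {i j : Fin 3} (hij : i ≠ j) {u v : Fin 3 →₀ ℕ}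
    (h : ¬ ∀ k, (u k : ℤ) - (v k : ℤ) =
        (if k = i then 1 else 0) - (if k = j then 1 else 0)) :
    polyInner (piE i j (monomial u 1)) (monomial v 1) = 0 := by
  rw [piE_monomial, polyInner_monomial]
  split_ifs with hexp
  · by_cases hu : u i = 0
    · simp [hu]
    · exact absurd ((exp_eq_iff hij hu).mp hexp) h
  · rfl

/-- for distinct multi-indices `a`, `b` of total degree `d`, the span `W`
of the monomials `x^a`, `x^b` satisfies `⟪π(E_{ij})p, q⟫ = 0` for all `i ≠ j` and all
`p, q ∈ W` (i.e. `W` is a nice space for the `GL₃(ℝ)`-action on ternary forms of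
degree `d`) if and only if `a − b` is not of the form `e_i − e_j` with `i ≠ j`. -/
theorem span_two_monomials_nice_iff
    (d : ℕ) (hd : 1 ≤ d)
    (a b : Fin 3 →₀ ℕ) (hab : a ≠ b)
    (hda : ∑ i : Fin 3, a i = d) (hdb : ∑ i : Fin 3, b i = d)
    (W : Submodule ℝ (MvPolynomial (Fin 3) ℝ))
    (hW : W = Submodule.span ℝ {MvPolynomial.monomial a (1 : ℝ),
      MvPolynomial.monomial b (1 : ℝ)}) :
    (∀ i j : Fin 3, i ≠ j → ∀ p ∈ W, ∀ q ∈ W, polyInner (piE i j p) q = 0) ↔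
      ¬∃ i j : Fin 3, i ≠ j ∧
        (fun k => (a k : ℤ) - (b k : ℤ)) =
          fun k => (if k = i then 1 else 0) - (if k = j then 1 else 0) := by
  subst hW
  have hMa : (monomial a (1:ℝ)) ∈ Submodule.span ℝ
      {MvPolynomial.monomial a (1 : ℝ), MvPolynomial.monomial b (1 : ℝ)} :=
    Submodule.subset_span (Set.mem_insert _ _)
  have hMb : (monomial b (1:ℝ)) ∈ Submodule.span ℝ
      {MvPolynomial.monomial a (1 : ℝ), MvPolynomial.monomial b (1 : ℝ)} :=
    Submodule.subset_span (Set.mem_insert_of_mem _ rfl)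
  constructor
  · rintro h ⟨i, j, hij, heq⟩
    have hfun : ∀ k, (a k : ℤ) - (b k : ℤ) =
        (if k = i then 1 else 0) - (if k = j then 1 else 0) := fun k => congrFun heq k
    have hai : a i ≠ 0 := by
      have := hfun i
      simp [hij] at this
      omega
    have hval := h i j hij _ hMa _ hMb
    have hexp := (exp_eq_iff hij hai).mpr hfun
    rw [piE_monomial, polyInner_monomial, if_pos hexp, hexp] at hval
    have hprod : (0:ℝ) < ∏ k : Fin 3, ((b k).factorial : ℝ) :=
      Finset.prod_pos fun k _ => by positivity
    have : (a i : ℝ) ≠ 0 := Nat.cast_ne_zero.mpr hai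
    rw [mul_one] at hval
    exact absurd hval (mul_ne_zero (neg_ne_zero.mpr this) hprod.ne')
  · intro hne i j hij p hp q hq
    rw [Submodule.mem_span_pair] at hp hq
    obtain ⟨c1, c2, rfl⟩ := hp
    obtain ⟨c3, c4, rfl⟩ := hq
    have key : ∀ u v : Fin 3 →₀ ℕ, ((u = a ∧ v = b) ∨ (u = b ∧ v = a) ∨ u = v) →
        polyInner (piE i j (monomial u 1)) (monomial v 1) = 0 := by
      rintro u v (⟨rfl, rfl⟩ | ⟨rfl, rfl⟩ | rfl)
      · refine inner_zero hij fun hall => hne ⟨i, j, hij, funext hall⟩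
      · refine inner_zero hij fun hall => hne ⟨j, i, hij.symm, funext fun k => ?_⟩
        have := hall k
        omega
      · refine inner_zero hij fun hall => ?_
        have := hall i
        simp [hij] at this
    rw [piE_add, piE_smul, piE_smul]
    simp only [polyInner_add_right, polyInner_smul_right, polyInner_add_left,
      polyInner_smul_left, key a a (by tauto), key b a (by tauto), key a b (by tauto),
      key b b (by tauto)]
    ring
end

section
/- Let v ∈ V be nonzero and let α₀ ∈ R(v) be an exposed point of the convex hull of R(v), witnessed by H ∈ 𝔞 and h ∈ ℝ such that ⟨α, H⟩ ≥ h for all α ∈ R(v), with equality if and only if α = α₀. Then lim_{t → −∞} m_𝔞(exp(t·π(H))v) = α₀. -/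
/-!
The flow `exp (t • π H)` multiplies the `α`-component of `v` by `exp (t ⟪α, H⟫)`. Since weight
spaces for distinct weights are orthogonal, the moment map of a sum of weight vectors is the
average of the weights `α`, weighted by the squared norms of the components. Along the flow these
weights are `exp (2 t ⟪α, H⟫) ‖v_α‖²`; as `t → -∞` the weight of `α₀`, which alone minimises
`⟪α, H⟫` on `R(v)`, dominates all others, so the average tends to `α₀`.
-/

open scoped InnerProductSpace
open Finset
open scoped Classical

open Filter Topology

theorem NormedSpace.exp_apply_of_apply_eq_smul {V : Type*} [NormedAddCommGroup V]
    [NormedSpace ℝ V] [CompleteSpace V] {A : V →L[ℝ] V} {w : V} {μ : ℝ} (hw : A w = μ • w) :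
    NormedSpace.exp A w = Real.exp μ • w := by
  have hpow : ∀ n : ℕ, (A ^ n) w = μ ^ n • w := by
    intro n
    induction n with
    | zero => simp
    | succ n ih => rw [pow_succ, mul_apply_eq_comp, hw, map_smul, ih, smul_smul, pow_succ']
  have hA :=
    (NormedSpace.exp_series_hasSum_exp' (𝕂 := ℝ) A).mapL (ContinuousLinearMap.apply ℝ V w)
  have hμ := (NormedSpace.exp_series_hasSum_exp' (𝕂 := ℝ) μ).smul_const w
  rw [← Real.exp_eq_exp_ℝ] at hμ
  refine hA.unique (hμ.congr_fun fun n => ?_)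
  simp [hpow, smul_smul]

theorem real_inner_sum_smul_sum_of_pairwise_orthogonal {ι V : Type*} [NormedAddCommGroup V]
    [InnerProductSpace ℝ V] (s : Finset ι) (u : ι → V)
    (hu : ∀ i ∈ s, ∀ j ∈ s, i ≠ j → ⟪u i, u j⟫_ℝ = 0) (a : ι → ℝ) :
    ⟪∑ i ∈ s, a i • u i, ∑ j ∈ s, u j⟫_ℝ = ∑ i ∈ s, a i * ‖u i‖ ^ 2 := by
  rw [sum_inner]
  refine sum_congr rfl fun i hi => ?_
  rw [inner_sum, sum_eq_single_of_mem i hi fun j hj hji => by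
    rw [real_inner_smul_left, hu i hi j hj hji.symm, mul_zero]]
  rw [real_inner_smul_left, real_inner_self_eq_norm_sq]

section WeightVectors

variable {𝔞 V : Type*} [NormedAddCommGroup 𝔞] [InnerProductSpace ℝ 𝔞]
  [NormedAddCommGroup V] [InnerProductSpace ℝ V] (π : 𝔞 →ₗ[ℝ] V →L[ℝ] V)

theorem real_inner_eq_zero_of_weight_ne
    (hsa : ∀ X : 𝔞, ∀ v w : V, ⟪(π X) v, w⟫_ℝ = ⟪v, (π X) w⟫_ℝ) {α β : 𝔞} {u w : V}
    (hu : ∀ X : 𝔞, (π X) u = ⟪α, X⟫_ℝ • u) (hw : ∀ X : 𝔞, (π X) w = ⟪β, X⟫_ℝ • w)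
    (hαβ : α ≠ β) : ⟪u, w⟫_ℝ = 0 := by
  have hsym := hsa (α - β) u w
  rw [hu, hw, real_inner_smul_left, real_inner_smul_right] at hsym
  have hzero : ⟪α - β, α - β⟫_ℝ * ⟪u, w⟫_ℝ = 0 := by
    rw [inner_sub_left, sub_mul, hsym, sub_self]
  refine (mul_eq_zero.mp hzero).resolve_left fun h => hαβ ?_
  exact sub_eq_zero.mp (inner_self_eq_zero.mp h)

variable [FiniteDimensional ℝ 𝔞]

theorem momentMap_inner (w : V) (X : 𝔞) :
    ⟪momentMap π w, X⟫_ℝ = ⟪(π X) w, w⟫_ℝ / ‖w‖ ^ 2 := by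
  rw [momentMap, InnerProductSpace.toDual_symm_apply]
  rfl

theorem momentMap_sum_of_weight_vectors
    (hsa : ∀ X : 𝔞, ∀ v w : V, ⟪(π X) v, w⟫_ℝ = ⟪v, (π X) w⟫_ℝ) (s : Finset 𝔞) (c : 𝔞 → V)
    (hc : ∀ α ∈ s, ∀ X : 𝔞, (π X) (c α) = ⟪α, X⟫_ℝ • c α) :
    momentMap π (∑ α ∈ s, c α) = (∑ α ∈ s, ‖c α‖ ^ 2)⁻¹ • ∑ α ∈ s, ‖c α‖ ^ 2 • α := by
  have horth : ∀ α ∈ s, ∀ β ∈ s, α ≠ β → ⟪c α, c β⟫_ℝ = 0 := fun α hα β hβ =>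
    real_inner_eq_zero_of_weight_ne π hsa (hc α hα) (hc β hβ)
  have hnorm : ‖∑ α ∈ s, c α‖ ^ 2 = ∑ α ∈ s, ‖c α‖ ^ 2 := by
    rw [← real_inner_self_eq_norm_sq]
    simpa using real_inner_sum_smul_sum_of_pairwise_orthogonal s c horth 1
  refine ext_inner_right ℝ fun X => ?_
  have hπ : (π X) (∑ α ∈ s, c α) = ∑ α ∈ s, ⟪α, X⟫_ℝ • c α := by
    rw [map_sum]
    exact sum_congr rfl fun α hα => hc α hα X
  rw [momentMap_inner, hπ, real_inner_sum_smul_sum_of_pairwise_orthogonal s c horth, hnorm,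
    real_inner_smul_left, sum_inner, div_eq_inv_mul]
  simp only [real_inner_smul_left, mul_comm]

theorem momentMap_exp_smul_sum_of_weight_vectors [CompleteSpace V]
    (hsa : ∀ X : 𝔞, ∀ v w : V, ⟪(π X) v, w⟫_ℝ = ⟪v, (π X) w⟫_ℝ) (s : Finset 𝔞) (c : 𝔞 → V)
    (hc : ∀ α ∈ s, ∀ X : 𝔞, (π X) (c α) = ⟪α, X⟫_ℝ • c α) (H : 𝔞) (t : ℝ) :
    momentMap π (NormedSpace.exp (t • π H) (∑ α ∈ s, c α)) =
      (∑ α ∈ s, Real.exp (t * (2 * ⟪α, H⟫_ℝ)) * ‖c α‖ ^ 2)⁻¹ •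
        ∑ α ∈ s, (Real.exp (t * (2 * ⟪α, H⟫_ℝ)) * ‖c α‖ ^ 2) • α := by
  have hscale : ∀ α ∈ s, NormedSpace.exp (t • π H) (c α) = Real.exp (t * ⟪α, H⟫_ℝ) • c α :=
    fun α hα => NormedSpace.exp_apply_of_apply_eq_smul (by rw [smul_apply, hc α hα, smul_smul])
  rw [map_sum, sum_congr rfl hscale, momentMap_sum_of_weight_vectors π hsa s _
    fun α hα X => by rw [map_smul, hc α hα, smul_comm]]
  simp only [norm_smul, mul_pow, Real.norm_eq_abs, sq_abs, ← Real.exp_nat_mul]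
  push_cast
  simp only [mul_left_comm (2 : ℝ)]

end WeightVectors

theorem tendsto_exp_weighted_average_atBot {ι E : Type*} [NormedAddCommGroup E]
    [NormedSpace ℝ E] (s : Finset ι) (e p : ι → ℝ) (x : ι → E) {i₀ : ι} (hi₀ : i₀ ∈ s)
    (hp : p i₀ ≠ 0) (hmin : ∀ i ∈ s, i ≠ i₀ → p i ≠ 0 → e i₀ < e i) :
    Tendsto (fun t : ℝ => (∑ i ∈ s, Real.exp (t * e i) * p i)⁻¹ •
      ∑ i ∈ s, (Real.exp (t * e i) * p i) • x i) atBot (𝓝 (x i₀)) := by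
  set q : ℝ → ι → ℝ := fun t i => Real.exp (t * (e i - e i₀)) * p i
  have hq : ∀ i ∈ s, Tendsto (fun t => q t i) atBot (𝓝 (if i = i₀ then p i₀ else 0)) := by
    intro i hi
    by_cases hii₀ : i = i₀
    · subst hii₀
      simp [q]
    by_cases hpi : p i = 0
    · simp [q, hpi, hii₀]
    have hdecay : Tendsto (fun t : ℝ => t * (e i - e i₀)) atBot atBot :=
      tendsto_id.atBot_mul_const (sub_pos.mpr (hmin i hi hii₀ hpi))
    simpa [q, hii₀] using (Real.tendsto_exp_atBot.comp hdecay).mul_const (p i)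
  have hden : Tendsto (fun t => ∑ i ∈ s, q t i) atBot (𝓝 (p i₀)) := by
    simpa [hi₀] using tendsto_finsetSum s hq
  have hnum : Tendsto (fun t => ∑ i ∈ s, q t i • x i) atBot (𝓝 (p i₀ • x i₀)) := by
    simpa [ite_smul, hi₀] using tendsto_finsetSum s fun i hi => (hq i hi).smul_const (x i)
  have hlim := (hden.inv₀ hp).smul hnum
  rw [inv_smul_smul₀ hp] at hlim
  refine hlim.congr fun t => ?_
  have hsplit : ∀ i, Real.exp (t * e i) * p i = Real.exp (t * e i₀) * q t i := fun i => by
    rw [← mul_assoc, ← Real.exp_add, mul_sub, add_sub_cancel]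
  simp_rw [hsplit, ← mul_sum, mul_smul, ← smul_sum]
  rw [mul_inv_rev, mul_smul, inv_smul_smul₀ (Real.exp_pos _).ne']

theorem momentMap_tendsto_exposed_point_general
    {𝔞 V : Type*} [NormedAddCommGroup 𝔞] [InnerProductSpace ℝ 𝔞] [FiniteDimensional ℝ 𝔞]
    [NormedAddCommGroup V] [InnerProductSpace ℝ V] [FiniteDimensional ℝ V]
    (π : 𝔞 →ₗ[ℝ] V →L[ℝ] V)
    (hsa : ∀ X : 𝔞, ∀ v w : V, ⟪(π X) v, w⟫_ℝ = ⟪v, (π X) w⟫_ℝ)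
    (ΔV : Finset 𝔞) (v : V)
    -- `c α` is the component of `v` in the weight space `V_α`:
    (c : 𝔞 → V)
    (hc : ∀ α ∈ ΔV, ∀ X : 𝔞, (π X) (c α) = ⟪α, X⟫_ℝ • c α)
    (hsum : v = ∑ α ∈ ΔV, c α)
    (Rv : Finset 𝔞) (hRv : Rv = ΔV.filter fun α => c α ≠ 0)
    (α₀ : 𝔞) (hα₀ : α₀ ∈ Rv)
    (H : 𝔞) (h : ℝ)
    (hlow : ∀ α ∈ Rv, h ≤ ⟪α, H⟫_ℝ)
    (hexp : ∀ α ∈ Rv, (⟪α, H⟫_ℝ = h ↔ α = α₀)) :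
    Filter.Tendsto (fun t : ℝ => momentMap π ((NormedSpace.exp (t • π H)) v))
      Filter.atBot (nhds α₀) := by
  subst hRv
  obtain ⟨hα₀Δ, hcα₀⟩ := mem_filter.mp hα₀
  refine (tendsto_exp_weighted_average_atBot ΔV (fun α => 2 * ⟪α, H⟫_ℝ) (fun α => ‖c α‖ ^ 2) id
    hα₀Δ (by positivity) fun α hα hne hcα => ?_).congr fun t => by
      rw [hsum, momentMap_exp_smul_sum_of_weight_vectors π hsa ΔV c hc]
      rfl
  have hαR : α ∈ ΔV.filter fun α => c α ≠ 0 := mem_filter.mpr ⟨hα, by simpa using hcα⟩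
  have hlt := (hlow α hαR).lt_of_ne fun heq => hne ((hexp α hαR).mp heq.symm)
  rw [(hexp α₀ hα₀).mpr rfl]
  linarith

/-- if `α₀ ∈ R(v)` is an exposed point of the convex hull of `R(v)`,
witnessed by `H ∈ 𝔞` and `h ∈ ℝ`, then `m_𝔞(exp(t·π(H))v) → α₀` as `t → −∞`. -/
theorem momentMap_tendsto_exposed_point
    {𝔞 V : Type*} [NormedAddCommGroup 𝔞] [InnerProductSpace ℝ 𝔞] [FiniteDimensional ℝ 𝔞]
    [NormedAddCommGroup V] [InnerProductSpace ℝ V] [FiniteDimensional ℝ V]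
    (π : 𝔞 →ₗ[ℝ] V →L[ℝ] V)
    (hsa : ∀ X : 𝔞, ∀ v w : V, ⟪(π X) v, w⟫_ℝ = ⟪v, (π X) w⟫_ℝ)
    (hcomm : ∀ X Y : 𝔞, Commute (π X) (π Y))
    (ΔV : Finset 𝔞) (v : V) (hv : v ≠ 0)
    -- `c α` is the component of `v` in the weight space `V_α`:
    (c : 𝔞 → V)
    (hc : ∀ α ∈ ΔV, ∀ X : 𝔞, (π X) (c α) = ⟪α, X⟫_ℝ • c α)
    (hsum : v = ∑ α ∈ ΔV, c α)
    (Rv : Finset 𝔞) (hRv : Rv = ΔV.filter fun α => c α ≠ 0)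
    (α₀ : 𝔞) (hα₀ : α₀ ∈ Rv)
    (H : 𝔞) (h : ℝ)
    (hlow : ∀ α ∈ Rv, h ≤ ⟪α, H⟫_ℝ)
    (hexp : ∀ α ∈ Rv, (⟪α, H⟫_ℝ = h ↔ α = α₀)) :
    Filter.Tendsto (fun t : ℝ => momentMap π ((NormedSpace.exp (t • π H)) v))
      Filter.atBot (nhds α₀) :=
  momentMap_tendsto_exposed_point_general π hsa ΔV v c hc hsum Rv hRv α₀ hα₀ H h hlow hexp
end
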